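/- arXiv:2407.15900 — 2 statements merged into one kernel-verified Lean document; each statement's English description precedes it below -/
import Mathlib

section
/- Let λ > 0 and let F_λ be the exponential cumulative distribution function with rate λ, i.e. F_λ(x) = 1 − e^{−λx} for x ≥ 0 and F_λ(x) = 0 for x < 0. Then for every threshold τ ≥ 0 and observation y ∈ ℝ, writing v = max(y, τ): twCRPS_τ(F_λ, y) = v − τ + (2/λ)(e^{−λv} − e^{−λτ}) + (1/(2λ)) e^{−2λτ}. -/
open MeasureTheory Set

/-- Threshold-weighted CRPS: `twCRPS_τ(F, y) = ∫_τ^∞ (F(z) − 𝟙{z ≥ y})² dz`. -/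
noncomputable def twCRPS (F : ℝ → ℝ) (τ y : ℝ) : ℝ :=
  ∫ z in Set.Ioi τ, (F z - if y ≤ z then (1 : ℝ) else 0) ^ 2

/-- Exponential CDF with rate `λ`. -/
noncomputable def expCDF (l : ℝ) (x : ℝ) : ℝ :=
  if x < 0 then 0 else 1 - Real.exp (-l * x)

/-! Split the integral at `v = max y τ`: on `(τ, v)` the indicator vanishes and on `(v, ∞)` it
equals `1`, so `twCRPS F τ y = ∫_τ^v F² + ∫_v^∞ (1 - F)²`. For `τ ≥ 0` both pieces lie in
`[0, ∞)`, where `F_λ z = 1 - e^{-λz}`, and the two integrals are elementary. -/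

theorem twCRPS_eq_intervalIntegral_add_integral_Ioi {F : ℝ → ℝ} {τ y : ℝ}
    (hlow : IntervalIntegrable (fun z => F z ^ 2) volume τ (max y τ))
    (hhigh : IntegrableOn (fun z => (1 - F z) ^ 2) (Ioi (max y τ))) :
    twCRPS F τ y = (∫ z in τ..max y τ, F z ^ 2) + ∫ z in Ioi (max y τ), (1 - F z) ^ 2 := by
  set v := max y τ
  have hτv : τ ≤ v := le_max_right y τ
  have h_eqOn_Ioo : EqOn (fun z => (F z - if y ≤ z then (1 : ℝ) else 0) ^ 2)
      (fun z => F z ^ 2) (Ioo τ v) := fun z hz => by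
    have hzy : ¬ y ≤ z := fun hyz => (max_le hyz hz.1.le).not_gt hz.2
    simp only [if_neg hzy, sub_zero]
  have h_eqOn_Ioi : EqOn (fun z => (F z - if y ≤ z then (1 : ℝ) else 0) ^ 2)
      (fun z => (1 - F z) ^ 2) (Ioi v) := fun z hz => by
    have hyz : y ≤ z := (le_max_left y τ).trans (le_of_lt hz)
    simp only [if_pos hyz]
    ring
  have hint_Ioc : IntegrableOn (fun z => (F z - if y ≤ z then (1 : ℝ) else 0) ^ 2) (Ioc τ v) :=
    (integrableOn_Ioc_iff_integrableOn_Ioo).mpr <|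
      (integrableOn_congr_fun h_eqOn_Ioo measurableSet_Ioo).mpr <|
        (integrableOn_Ioc_iff_integrableOn_Ioo).mp
          ((intervalIntegrable_iff_integrableOn_Ioc_of_le hτv).mp hlow)
  rw [twCRPS, ← Ioc_union_Ioi_eq_Ioi hτv,
    setIntegral_union (Ioc_disjoint_Ioi le_rfl) measurableSet_Ioi hint_Ioc
      ((integrableOn_congr_fun h_eqOn_Ioi measurableSet_Ioi).mpr hhigh),
    integral_Ioc_eq_integral_Ioo, setIntegral_congr_fun measurableSet_Ioo h_eqOn_Ioo,
    setIntegral_congr_fun measurableSet_Ioi h_eqOn_Ioi, intervalIntegral.integral_of_le hτv,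
    integral_Ioc_eq_integral_Ioo]

theorem expCDF_of_nonneg (l : ℝ) {x : ℝ} (hx : 0 ≤ x) : expCDF l x = 1 - Real.exp (-l * x) :=
  if_neg hx.not_gt

theorem expCDF_eq_one_sub_exp_max (l x : ℝ) : expCDF l x = 1 - Real.exp (-l * max x 0) := by
  rcases lt_or_ge x 0 with hx | hx
  · simp [expCDF, hx, hx.le]
  · rw [expCDF_of_nonneg l hx, max_eq_left hx]

theorem continuous_expCDF (l : ℝ) : Continuous (expCDF l) := by
  simp only [funext (expCDF_eq_one_sub_exp_max l)]
  fun_prop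

theorem exp_neg_mul_sq (c x : ℝ) : Real.exp (-c * x) ^ 2 = Real.exp (-2 * c * x) := by
  rw [← Real.exp_nat_mul]
  ring_nf

theorem one_sub_expCDF_sq_eqOn_Ici (l : ℝ) :
    EqOn (fun z => (1 - expCDF l z) ^ 2) (fun z => Real.exp (-2 * l * z)) (Ici 0) :=
  fun z hz => by
    beta_reduce
    rw [expCDF_of_nonneg l hz, sub_sub_cancel, exp_neg_mul_sq]

theorem integrableOn_Ioi_one_sub_expCDF_sq {l : ℝ} (hl : 0 < l) {a : ℝ} (ha : 0 ≤ a) :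
    IntegrableOn (fun z => (1 - expCDF l z) ^ 2) (Ioi a) :=
  (integrableOn_congr_fun ((one_sub_expCDF_sq_eqOn_Ici l).mono (Ioi_subset_Ici ha))
    measurableSet_Ioi).mpr (integrableOn_exp_mul_Ioi (by linarith) a)

theorem integral_Ioi_one_sub_expCDF_sq {l : ℝ} (hl : 0 < l) {a : ℝ} (ha : 0 ≤ a) :
    ∫ z in Ioi a, (1 - expCDF l z) ^ 2 = Real.exp (-2 * l * a) / (2 * l) := by
  rw [setIntegral_congr_fun measurableSet_Ioi
      ((one_sub_expCDF_sq_eqOn_Ici l).mono (Ioi_subset_Ici ha)),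
    integral_exp_mul_Ioi (by linarith) a]
  field_simp

theorem integral_one_sub_exp_neg_mul_sq {c : ℝ} (hc : c ≠ 0) (a b : ℝ) :
    ∫ z in a..b, (1 - Real.exp (-c * z)) ^ 2
      = b - a + 2 / c * (Real.exp (-c * b) - Real.exp (-c * a))
      - (Real.exp (-2 * c * b) - Real.exp (-2 * c * a)) / (2 * c) := by
  have hderiv : ∀ x, HasDerivAt
      (fun z => z + 2 / c * Real.exp (-c * z) - Real.exp (-2 * c * z) / (2 * c))
      ((1 - Real.exp (-c * x)) ^ 2) x := by
    intro x
    have h1 := ((hasDerivAt_id' x).const_mul (-c)).exp.const_mul (2 / c)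
    have h2 := ((hasDerivAt_id' x).const_mul (-2 * c)).exp.div_const (2 * c)
    refine (((hasDerivAt_id' x).add h1).sub h2).congr_deriv ?_
    rw [sub_sq, exp_neg_mul_sq]
    field_simp
    ring
  rw [intervalIntegral.integral_eq_sub_of_hasDerivAt (fun x _ => hderiv x)
    ((by fun_prop : Continuous fun z => (1 - Real.exp (-c * z)) ^ 2).intervalIntegrable a b)]
  ring

theorem integral_expCDF_sq {l : ℝ} (hl : l ≠ 0) {a b : ℝ} (ha : 0 ≤ a) (hb : 0 ≤ b) :
    ∫ z in a..b, expCDF l z ^ 2 = b - a + 2 / l * (Real.exp (-l * b) - Real.exp (-l * a))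
      - (Real.exp (-2 * l * b) - Real.exp (-2 * l * a)) / (2 * l) := by
  rw [← integral_one_sub_exp_neg_mul_sq hl]
  refine intervalIntegral.integral_congr fun z hz => ?_
  have hz0 : 0 ≤ z := le_min ha hb |>.trans hz.1
  simp only [expCDF_of_nonneg l hz0]

theorem twCRPS_exponential (l : ℝ) (hl : 0 < l) (τ y : ℝ) (hτ : 0 ≤ τ) :
    twCRPS (expCDF l) τ y =
      max y τ - τ
        + 2 / l * (Real.exp (-l * max y τ) - Real.exp (-l * τ))
        + 1 / (2 * l) * Real.exp (-2 * l * τ) := by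
  have hv : 0 ≤ max y τ := hτ.trans (le_max_right y τ)
  rw [twCRPS_eq_intervalIntegral_add_integral_Ioi
      (((continuous_expCDF l).fun_pow 2).intervalIntegrable _ _)
      (integrableOn_Ioi_one_sub_expCDF_sq hl hv),
    integral_expCDF_sq hl.ne' hτ hv, integral_Ioi_one_sub_expCDF_sq hl hv]
  ring
end

section
/- Let −∞ < a < b < ∞ and let F_a^b denote the standard normal distribution truncated to [a, b], i.e. F_a^b(x) = 0 for x < a, F_a^b(x) = (Φ(x) − Φ(a))/(Φ(b) − Φ(a)) for a ≤ x ≤ b, and F_a^b(x) = 1 for x > b. Then for every threshold τ with a ≤ τ ≤ b and every observation y with a ≤ y ≤ b, writing v = max(y, τ): twCRPS_τ(F_a^b, y) = −τ ((Φ(τ) − Φ(a))/(Φ(b) − Φ(a)))² + v (2 (Φ(v) − Φ(a))/(Φ(b) − Φ(a)) − 1) + (2/(Φ(b) − Φ(a))) (φ(v) − φ(τ) (Φ(τ) − Φ(a))/(Φ(b) − Φ(a))) − (1/√π) (Φ(√2·b) − Φ(√2·τ))/(Φ(b) − Φ(a))². -/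
open MeasureTheory Set

/-- Standard normal density `φ(x) = (1/√(2π)) e^{−x²/2}`. -/
noncomputable def stdNormalPDF (x : ℝ) : ℝ :=
  (Real.sqrt (2 * Real.pi))⁻¹ * Real.exp (-x ^ 2 / 2)

/-- Standard normal CDF `Φ(x) = ∫_{-∞}^x φ(u) du`. -/
noncomputable def stdNormalCDF (x : ℝ) : ℝ :=
  ∫ u in Set.Iic x, stdNormalPDF u

/-- CDF of the standard normal distribution truncated to `[a, b]`. -/
noncomputable def truncNormalCDF (a b : ℝ) (x : ℝ) : ℝ :=
  if x < a then 0
  else if x ≤ b then (stdNormalCDF x - stdNormalCDF a) / (stdNormalCDF b - stdNormalCDF a)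
  else 1

/-!
On `[τ, b]` the integrand of `twCRPS` is `F²` left of `v = max y τ` and `(F - 1)²` right of it,
while it vanishes beyond `b`. On `[a, b]` both are `(Φ - k)² / (Φ(b) - Φ(a))²` for a constant
`k`, and `(Φ - k)²` has an explicit primitive: integrating by parts and using `φ' = -z φ` reduces
it to `∫ φ²`, which is a Gaussian integral with variance `1/2`, namely `Φ(√2 z) / (2√π)`.
-/

lemma continuous_stdNormalPDF : Continuous stdNormalPDF := by
  unfold stdNormalPDF; fun_prop

lemma stdNormalPDF_pos (x : ℝ) : 0 < stdNormalPDF x := by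
  unfold stdNormalPDF; positivity

lemma integrable_stdNormalPDF : Integrable stdNormalPDF := by
  have h : stdNormalPDF = fun x => (Real.sqrt (2 * Real.pi))⁻¹ * Real.exp (-2⁻¹ * x ^ 2) := by
    funext x; unfold stdNormalPDF; ring_nf
  rw [h]
  exact (integrable_exp_neg_mul_sq (by norm_num)).const_mul _

lemma hasDerivAt_stdNormalCDF (x : ℝ) : HasDerivAt stdNormalCDF (stdNormalPDF x) x := by
  have h : stdNormalCDF = fun t => stdNormalCDF 0 + ∫ u in (0 : ℝ)..t, stdNormalPDF u := by
    funext t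
    rw [← intervalIntegral.integral_Iic_sub_Iic integrable_stdNormalPDF.integrableOn
      integrable_stdNormalPDF.integrableOn, stdNormalCDF, stdNormalCDF]
    ring
  rw [h]
  exact (intervalIntegral.integral_hasDerivAt_right
    (continuous_stdNormalPDF.intervalIntegrable _ _)
    continuous_stdNormalPDF.aestronglyMeasurable.stronglyMeasurableAtFilter
    continuous_stdNormalPDF.continuousAt).const_add _

lemma continuous_stdNormalCDF : Continuous stdNormalCDF :=
  continuous_iff_continuousAt.2 fun x => (hasDerivAt_stdNormalCDF x).continuousAt

lemma strictMono_stdNormalCDF : StrictMono stdNormalCDF :=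
  strictMono_of_hasDerivAt_pos hasDerivAt_stdNormalCDF stdNormalPDF_pos

lemma hasDerivAt_stdNormalPDF (x : ℝ) : HasDerivAt stdNormalPDF (-x * stdNormalPDF x) x := by
  have h : HasDerivAt (fun z : ℝ => -z ^ 2 / 2) (-x) x := by
    simpa using ((hasDerivAt_pow 2 x).neg.div_const 2).congr_deriv (by ring : _ = -x)
  refine ((h.exp).const_mul (Real.sqrt (2 * Real.pi))⁻¹).congr_deriv ?_
  unfold stdNormalPDF; ring

lemma two_mul_stdNormalPDF_sq (x : ℝ) :
    2 * stdNormalPDF x ^ 2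
      = (Real.sqrt Real.pi)⁻¹ * Real.sqrt 2 * stdNormalPDF (Real.sqrt 2 * x) := by
  have hexp : Real.exp (-x ^ 2 / 2) ^ 2 = Real.exp (-(Real.sqrt 2 * x) ^ 2 / 2) := by
    rw [← Real.exp_nat_mul, mul_pow, Real.sq_sqrt zero_le_two]; ring_nf
  have hπ : Real.sqrt Real.pi ≠ 0 := by positivity
  unfold stdNormalPDF
  rw [mul_pow, hexp, inv_pow, Real.sq_sqrt (by positivity), Real.sqrt_mul zero_le_two]
  field_simp
  exact Real.sq_sqrt Real.pi_pos.le

noncomputable def cdfSubSqPrimitive (k z : ℝ) : ℝ :=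
  z * (stdNormalCDF z - k) ^ 2 + 2 * stdNormalPDF z * (stdNormalCDF z - k)
    - (Real.sqrt Real.pi)⁻¹ * stdNormalCDF (Real.sqrt 2 * z)

lemma hasDerivAt_cdfSubSqPrimitive (k x : ℝ) :
    HasDerivAt (cdfSubSqPrimitive k) ((stdNormalCDF x - k) ^ 2) x := by
  have hΦ := (hasDerivAt_stdNormalCDF x).sub_const k
  have hΦ_sqrt2 : HasDerivAt (fun z => stdNormalCDF (Real.sqrt 2 * z))
      (stdNormalPDF (Real.sqrt 2 * x) * Real.sqrt 2) x :=
    (hasDerivAt_stdNormalCDF _).comp x (by simpa using (hasDerivAt_id x).const_mul (Real.sqrt 2))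
  have h := (((hasDerivAt_id x).mul (hΦ.pow 2)).add
    (((hasDerivAt_stdNormalPDF x).const_mul 2).mul hΦ)).sub
    (hΦ_sqrt2.const_mul (Real.sqrt Real.pi)⁻¹)
  refine h.congr_deriv ?_
  simp only [id, Pi.pow_apply]
  linear_combination two_mul_stdNormalPDF_sq x

lemma integral_stdNormalCDF_sub_sq (k u w : ℝ) :
    ∫ z in u..w, (stdNormalCDF z - k) ^ 2 = cdfSubSqPrimitive k w - cdfSubSqPrimitive k u :=
  intervalIntegral.integral_eq_sub_of_hasDerivAt (fun x _ => hasDerivAt_cdfSubSqPrimitive k x)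
    (((continuous_stdNormalCDF.sub continuous_const).pow 2).intervalIntegrable u w)

theorem twCRPS_eq_integral_add_integral {F : ℝ → ℝ} {τ y b : ℝ} (hτb : τ ≤ b) (hyb : y ≤ b)
    (hF : ContinuousOn F (Icc τ b)) (hF_one : ∀ z, b < z → F z = 1) :
    twCRPS F τ y = (∫ z in τ..max y τ, F z ^ 2) + ∫ z in max y τ..b, (F z - 1) ^ 2 := by
  set v := max y τ
  set g : ℝ → ℝ := fun z => (F z - if y ≤ z then 1 else 0) ^ 2
  have hτv : τ ≤ v := le_max_right y τ
  have hvb : v ≤ b := max_le hyb hτb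
  have h_left : EqOn g (fun z => F z ^ 2) (uIoo τ v) := by
    rintro z ⟨hτz, hzv⟩
    rw [min_eq_left hτv] at hτz
    rw [max_eq_right hτv, lt_max_iff] at hzv
    have hzy : z < y := hzv.resolve_right hτz.not_gt
    simp only [g, if_neg hzy.not_ge, sub_zero]
  have h_right : EqOn g (fun z => (F z - 1) ^ 2) (uIoo v b) := by
    rintro z ⟨hvz, -⟩
    rw [min_eq_left hvb] at hvz
    simp only [g, if_pos ((le_max_left y τ).trans hvz.le)]
  have h_tail : EqOn g 0 (Ioi b) := fun z hz => by
    simp only [g, hF_one z hz, if_pos (hyb.trans hz.le), sub_self, Pi.zero_apply]; norm_num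
  have hint_left : IntervalIntegrable g volume τ v :=
    (((hF.mono (Icc_subset_Icc_right hvb)).pow 2).intervalIntegrable_of_Icc hτv).congr_uIoo
      h_left.symm
  have hint_right : IntervalIntegrable g volume v b :=
    (((hF.mono (Icc_subset_Icc_left hτv)).sub continuousOn_const).pow 2
      |>.intervalIntegrable_of_Icc hvb).congr_uIoo h_right.symm
  calc twCRPS F τ y = ∫ z in Ioi τ, g z := rfl
    _ = (∫ z in τ..b, g z) + ∫ z in Ioi b, g z :=
      (intervalIntegral.integral_interval_add_Ioi' (hint_left.trans hint_right)
        (integrableOn_zero.congr_fun h_tail.symm measurableSet_Ioi)).symm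
    _ = (∫ z in τ..v, g z) + ∫ z in v..b, g z := by
      rw [setIntegral_congr_fun measurableSet_Ioi h_tail, Pi.zero_def, integral_zero, add_zero,
        intervalIntegral.integral_add_adjacent_intervals hint_left hint_right]
    _ = _ := by
      rw [intervalIntegral.integral_congr_uIoo h_left, intervalIntegral.integral_congr_uIoo h_right]

lemma truncNormalCDF_of_mem_Icc {a b x : ℝ} (hx : x ∈ Icc a b) :
    truncNormalCDF a b x = (stdNormalCDF x - stdNormalCDF a) / (stdNormalCDF b - stdNormalCDF a) := by
  rw [truncNormalCDF, if_neg hx.1.not_gt, if_pos hx.2]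

lemma truncNormalCDF_of_lt {a b x : ℝ} (hab : a ≤ b) (hx : b < x) : truncNormalCDF a b x = 1 := by
  rw [truncNormalCDF, if_neg (hab.trans hx.le).not_gt, if_neg hx.not_ge]

lemma continuousOn_truncNormalCDF (a b : ℝ) : ContinuousOn (truncNormalCDF a b) (Icc a b) :=
  ((continuous_stdNormalCDF.sub continuous_const).div_const _).continuousOn.congr
    fun _ hx => truncNormalCDF_of_mem_Icc hx

lemma integral_truncNormalCDF_sq {a b u w : ℝ} (hau : a ≤ u) (huw : u ≤ w) (hwb : w ≤ b) :
    ∫ z in u..w, truncNormalCDF a b z ^ 2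
      = (cdfSubSqPrimitive (stdNormalCDF a) w - cdfSubSqPrimitive (stdNormalCDF a) u)
        / (stdNormalCDF b - stdNormalCDF a) ^ 2 := by
  rw [← integral_stdNormalCDF_sub_sq, ← intervalIntegral.integral_div]
  refine intervalIntegral.integral_congr fun z hz => ?_
  rw [uIcc_of_le huw] at hz
  simp only [truncNormalCDF_of_mem_Icc ⟨hau.trans hz.1, hz.2.trans hwb⟩, div_pow]

lemma integral_truncNormalCDF_sub_one_sq {a b u w : ℝ} (hab : a < b) (hau : a ≤ u) (huw : u ≤ w)
    (hwb : w ≤ b) :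
    ∫ z in u..w, (truncNormalCDF a b z - 1) ^ 2
      = (cdfSubSqPrimitive (stdNormalCDF b) w - cdfSubSqPrimitive (stdNormalCDF b) u)
        / (stdNormalCDF b - stdNormalCDF a) ^ 2 := by
  have hC : stdNormalCDF b - stdNormalCDF a ≠ 0 := (sub_pos.2 (strictMono_stdNormalCDF hab)).ne'
  rw [← integral_stdNormalCDF_sub_sq, ← intervalIntegral.integral_div]
  refine intervalIntegral.integral_congr fun z hz => ?_
  rw [uIcc_of_le huw] at hz
  simp only [truncNormalCDF_of_mem_Icc ⟨hau.trans hz.1, hz.2.trans hwb⟩]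
  field_simp
  ring

theorem twCRPS_truncNormal_general (a b : ℝ) (hab : a < b)
    (τ y : ℝ) (hτa : a ≤ τ) (hτb : τ ≤ b) (hyb : y ≤ b) :
    twCRPS (truncNormalCDF a b) τ y =
      -τ * ((stdNormalCDF τ - stdNormalCDF a) / (stdNormalCDF b - stdNormalCDF a)) ^ 2
        + max y τ *
          (2 * (stdNormalCDF (max y τ) - stdNormalCDF a)
              / (stdNormalCDF b - stdNormalCDF a) - 1)
        + 2 / (stdNormalCDF b - stdNormalCDF a) *
          (stdNormalPDF (max y τ)
            - stdNormalPDF τ *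
              (stdNormalCDF τ - stdNormalCDF a) / (stdNormalCDF b - stdNormalCDF a))
        - (Real.sqrt Real.pi)⁻¹ *
          (stdNormalCDF (Real.sqrt 2 * b) - stdNormalCDF (Real.sqrt 2 * τ))
            / (stdNormalCDF b - stdNormalCDF a) ^ 2 := by
  have hC : stdNormalCDF b - stdNormalCDF a ≠ 0 := (sub_pos.2 (strictMono_stdNormalCDF hab)).ne'
  have hτv : τ ≤ max y τ := le_max_right y τ
  have hvb : max y τ ≤ b := max_le hyb hτb
  rw [twCRPS_eq_integral_add_integral hτb hyb
      ((continuousOn_truncNormalCDF a b).mono (Icc_subset_Icc_left hτa))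
      (fun z hz => truncNormalCDF_of_lt hab.le hz),
    integral_truncNormalCDF_sq hτa hτv hvb,
    integral_truncNormalCDF_sub_one_sq hab (hτa.trans hτv) hvb le_rfl]
  unfold cdfSubSqPrimitive
  field_simp
  ring

theorem twCRPS_truncNormal (a b : ℝ) (hab : a < b)
    (τ y : ℝ) (hτa : a ≤ τ) (hτb : τ ≤ b) (hya : a ≤ y) (hyb : y ≤ b) :
    twCRPS (truncNormalCDF a b) τ y =
      -τ * ((stdNormalCDF τ - stdNormalCDF a) / (stdNormalCDF b - stdNormalCDF a)) ^ 2
        + max y τ *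
          (2 * (stdNormalCDF (max y τ) - stdNormalCDF a)
              / (stdNormalCDF b - stdNormalCDF a) - 1)
        + 2 / (stdNormalCDF b - stdNormalCDF a) *
          (stdNormalPDF (max y τ)
            - stdNormalPDF τ *
              (stdNormalCDF τ - stdNormalCDF a) / (stdNormalCDF b - stdNormalCDF a))
        - (Real.sqrt Real.pi)⁻¹ *
          (stdNormalCDF (Real.sqrt 2 * b) - stdNormalCDF (Real.sqrt 2 * τ))
            / (stdNormalCDF b - stdNormalCDF a) ^ 2 :=
  twCRPS_truncNormal_general a b hab τ y hτa hτb hyb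
end
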